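/- arXiv:1405.2191 — 5 statements merged into one kernel-verified Lean document; each statement's English description precedes it below -/
import Mathlib

section
/- Let f, g ∈ L¹(V) with f ≥ 0 almost everywhere. Then ∫_V sgn⁺(f(v) − g(v))·[σ(⟨f⟩)L(f)(v) − σ(⟨g⟩)L(g)(v)] dv ≤ 0, where sgn⁺(x) := 1 if x ≥ 0 and 0 otherwise. -/
/-! On `{f ≥ g}` one has `σ(⟨f⟩)L(f) − σ(⟨g⟩)L(g) = c + (σ(⟨g⟩) − σ(⟨f⟩)) f − σ(⟨g⟩)(f − g)` with
`c = σ(⟨f⟩)⟨f⟩ − σ(⟨g⟩)⟨g⟩`, and by (H3) the constants `c` and `σ(⟨g⟩) − σ(⟨f⟩)` have the sign of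
`⟨f⟩ − ⟨g⟩`. If `⟨f⟩ ≤ ⟨g⟩` the integrand is therefore pointwise `≤ 0`. If `⟨g⟩ ≤ ⟨f⟩` the same
identity shows that the bracket is `≥ 0` on `{f < g}`, so the integrand is dominated by the bracket
itself, whose integral vanishes because `⟨L(h)⟩ = 0` for a probability measure. -/

open MeasureTheory

noncomputable section

/-- The `N`-dimensional torus with its (normalized) Lebesgue measure. -/
abbrev Torus (N : ℕ) := Fin N → AddCircle (1 : ℝ)

instance : IsProbabilityMeasure (volume : Measure (AddCircle (1 : ℝ))) :=
  ⟨by simp [AddCircle.measure_univ]⟩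

-- Both follow from `s (a - x) - s' (b - y) = (s a - s' b) + (s' - s) x + s' (y - x)`.
lemma mul_sub_sub_mul_sub_nonpos {s s' a b x y : ℝ} (hs' : 0 ≤ s') (hss' : s' ≤ s)
    (hab : s * a ≤ s' * b) (hx : 0 ≤ x) (hyx : y ≤ x) :
    s * (a - x) - s' * (b - y) ≤ 0 := by
  nlinarith [mul_nonneg (sub_nonneg.2 hss') hx, mul_nonneg hs' (sub_nonneg.2 hyx)]

lemma mul_sub_sub_mul_sub_nonneg {s s' a b x y : ℝ} (hs' : 0 ≤ s') (hss' : s ≤ s')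
    (hba : s' * b ≤ s * a) (hx : 0 ≤ x) (hxy : x ≤ y) :
    0 ≤ s * (a - x) - s' * (b - y) := by
  nlinarith [mul_nonneg (sub_nonneg.2 hss') hx, mul_nonneg hs' (sub_nonneg.2 hxy)]

section

variable {Ω : Type*} [MeasurableSpace Ω] {μ : Measure Ω}

lemma integral_integral_sub [IsProbabilityMeasure μ] {f : Ω → ℝ} (hf : Integrable f μ) :
    ∫ v, ((∫ w, f w ∂μ) - f v) ∂μ = 0 := by
  rw [integral_sub (integrable_const _) hf, integral_const, probReal_univ, one_smul, sub_self]

lemma MeasureTheory.Integrable.ite_nonneg_mul {u h : Ω → ℝ} (hu : AEMeasurable u μ) (hh : Integrable h μ) :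
    Integrable (fun v => (if 0 ≤ u v then (1 : ℝ) else 0) * h v) μ := by
  refine hh.bdd_mul (c := 1) ?_ (.of_forall fun v => ?_)
  · exact ((Measurable.ite measurableSet_Ici measurable_const measurable_const).comp_aemeasurable
      hu).aestronglyMeasurable
  · split_ifs <;> simp

theorem integral_sgnPlus_mul_sub_nonpos [IsProbabilityMeasure μ] {σ : ℝ → ℝ}
    (hσ : ∀ y, 0 ≤ σ y) (hσanti : Antitone σ) (hσmono : Monotone fun y : ℝ => σ y * y)
    {f g : Ω → ℝ} (hf : Integrable f μ) (hg : Integrable g μ) (hfpos : 0 ≤ᵐ[μ] f) :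
    ∫ v, (if 0 ≤ f v - g v then (1 : ℝ) else 0) *
        (σ (∫ w, f w ∂μ) * ((∫ w, f w ∂μ) - f v) - σ (∫ w, g w ∂μ) * ((∫ w, g w ∂μ) - g v)) ∂μ
      ≤ 0 := by
  set a := ∫ w, f w ∂μ
  set b := ∫ w, g w ∂μ
  rcases le_total a b with hab | hba
  · refine integral_nonpos_of_ae ?_
    filter_upwards [hfpos] with v hfv
    split_ifs with hfg
    · rw [one_mul]
      exact mul_sub_sub_mul_sub_nonpos (hσ b) (hσanti hab) (hσmono hab) hfv (by linarith)
    · exact (zero_mul _).le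
  · have hfa : Integrable (fun v => σ a * (a - f v)) μ := ((integrable_const a).sub hf).const_mul _
    have hgb : Integrable (fun v => σ b * (b - g v)) μ := ((integrable_const b).sub hg).const_mul _
    have hbracket := hfa.sub hgb
    calc _ ≤ ∫ v, (σ a * (a - f v) - σ b * (b - g v)) ∂μ := by
          refine integral_mono_ae (hbracket.ite_nonneg_mul (hf.sub hg).aemeasurable) hbracket ?_
          filter_upwards [hfpos] with v hfv
          split_ifs with hfg
          · rw [one_mul]
          · rw [zero_mul]
            exact mul_sub_sub_mul_sub_nonneg (hσ b) (hσanti hba) (hσmono hba) hfv (by linarith)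
      _ = 0 := by
          rw [integral_sub hfa hgb, integral_const_mul, integral_const_mul,
            integral_integral_sub hf, integral_integral_sub hg, mul_zero, mul_zero, sub_zero]

end

theorem accretivity_sgn_plus_general
    (N : ℕ) (σ : ℝ → ℝ) (σstar σStar : ℝ)
    (hσstar : 0 < σstar)
    (hσbound : ∀ y : ℝ, σstar ≤ σ y ∧ σ y ≤ σStar)
    (hσanti : Antitone σ)
    (hσmono : Monotone fun y : ℝ => σ y * y)
    (f g : Torus N → ℝ) (hf : Integrable f) (hg : Integrable g)
    (hfpos : 0 ≤ᵐ[volume] f) :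
    ∫ v, (if 0 ≤ f v - g v then (1 : ℝ) else 0) *
        (σ (∫ w, f w) * ((∫ w, f w) - f v) - σ (∫ w, g w) * ((∫ w, g w) - g v)) ≤ 0 :=
  integral_sgnPlus_mul_sub_nonpos (fun y => hσstar.le.trans (hσbound y).1) hσanti hσmono hf hg
    hfpos

theorem accretivity_sgn_plus
    (N : ℕ) (σ : ℝ → ℝ) (σstar σStar : ℝ) (K : NNReal)
    (hσstar : 0 < σstar) (hσStar : 0 < σStar)
    (hσbound : ∀ y : ℝ, σstar ≤ σ y ∧ σ y ≤ σStar)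
    (hσlip : LipschitzWith K σ)
    (hσanti : Antitone σ)
    (hσmono : Monotone fun y : ℝ => σ y * y)
    (f g : Torus N → ℝ) (hf : Integrable f) (hg : Integrable g)
    (hfpos : 0 ≤ᵐ[volume] f) :
    ∫ v, (if 0 ≤ f v - g v then (1 : ℝ) else 0) *
        (σ (∫ w, f w) * ((∫ w, f w) - f v) - σ (∫ w, g w) * ((∫ w, g w) - g v)) ≤ 0 :=
  accretivity_sgn_plus_general N σ σstar σStar hσstar hσbound hσanti hσmono f g hf hg hfpos
end
end

section
/- There exists a constant C > 0, depending only on the Lipschitz constant of σ and on σ^*, such that for every δ > 0 and all f, g ∈ L¹(V) with f ≥ 0 almost everywhere, one has ∫_V φ_δ'(f(v) − g(v))·[σ(⟨f⟩)L(f)(v) − σ(⟨g⟩)L(g)(v)] dv ≤ C(1 + ‖f‖_{L¹(V)})·δ. -/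
/- STATEMENT 2: There is a constant `C > 0` (depending only on the Lipschitz constant of
`σ` and on `σ^*`) such that for every `δ > 0` and all `f, g ∈ L¹(V)` with `f ≥ 0` a.e.,
`∫_V φ_δ'(f − g) [σ(⟨f⟩)L(f) − σ(⟨g⟩)L(g)] dv ≤ C (1 + ‖f‖_{L¹}) δ`,
where `φ_δ'(x) = ψ(x/δ)` for a fixed smooth non-decreasing `ψ` with `ψ = 0` on `(-∞,0]`,
`ψ = 1` on `[1,∞)` and `0 < ψ < 1` on `(0,1)`. -/

open MeasureTheory

noncomputable section

/-! Write `D = σ(⟨f⟩) L(f) − σ(⟨g⟩) L(g)` and `h = ψ((f − g)/δ) ∈ [0, 1]`. If `⟨f⟩ ≤ ⟨g⟩`, the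
monotonicity assumptions on `σ` make `h D ≤ 0` pointwise. If `⟨g⟩ ≤ ⟨f⟩`, they give
`h D ≤ D + σ(⟨g⟩) δ` pointwise, the error coming only from the set `0 < f − g < δ` where `h`
is not yet `1`; since `⟨L f⟩ = ⟨L g⟩ = 0`, integrating yields `∫ h D ≤ σ(⟨g⟩) δ ≤ σ^* δ`. -/

instance Torus.isProbabilityMeasure (N : ℕ) :
    IsProbabilityMeasure (volume : Measure (Torus N)) := by
  constructor
  rw [volume_pi, Measure.pi_univ]
  simp [AddCircle.measure_univ]

theorem integral_integral_sub_self {α : Type*} [MeasurableSpace α] {μ : Measure α}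
    [IsProbabilityMeasure μ] {f : α → ℝ} (hf : Integrable f μ) :
    ∫ x, ((∫ y, f y ∂μ) - f x) ∂μ = 0 := by
  simp [integral_sub (integrable_const _) hf]

section Cutoff

variable {ψ : ℝ → ℝ}

theorem cutoff_nonneg (hψmono : Monotone ψ) (hψ0 : ∀ x : ℝ, x ≤ 0 → ψ x = 0) (x : ℝ) :
    0 ≤ ψ x :=
  calc 0 = ψ (min x 0) := (hψ0 _ (min_le_right x 0)).symm
    _ ≤ ψ x := hψmono (min_le_left x 0)

theorem cutoff_le_one (hψmono : Monotone ψ) (hψ1 : ∀ x : ℝ, 1 ≤ x → ψ x = 1) (x : ℝ) :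
    ψ x ≤ 1 :=
  calc ψ x ≤ ψ (max x 1) := hψmono (le_max_left x 1)
    _ = 1 := hψ1 _ (le_max_right x 1)

theorem cutoff_div_mul_self_nonneg (hψmono : Monotone ψ) (hψ0 : ∀ x : ℝ, x ≤ 0 → ψ x = 0)
    {δ : ℝ} (hδ : 0 ≤ δ) (x : ℝ) : 0 ≤ ψ (x / δ) * x := by
  rcases le_total x 0 with hx | hx
  · rw [hψ0 _ (div_nonpos_of_nonpos_of_nonneg hx hδ), zero_mul]
  · exact mul_nonneg (cutoff_nonneg hψmono hψ0 _) hx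

theorem sub_le_cutoff_div_mul_self (hψmono : Monotone ψ) (hψ0 : ∀ x : ℝ, x ≤ 0 → ψ x = 0)
    (hψ1 : ∀ x : ℝ, 1 ≤ x → ψ x = 1) {δ : ℝ} (hδ : 0 < δ) (x : ℝ) :
    x - δ ≤ ψ (x / δ) * x := by
  rcases le_total δ x with hx | hx
  · rw [hψ1 _ ((one_le_div hδ).mpr hx), one_mul]
    linarith
  · linarith [cutoff_div_mul_self_nonneg hψmono hψ0 hδ.le x]

variable {σ : ℝ → ℝ} {a b x y δ : ℝ}

theorem cutoff_mul_flux_nonpos (hψmono : Monotone ψ) (hψ0 : ∀ x : ℝ, x ≤ 0 → ψ x = 0)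
    (hσanti : Antitone σ) (hσmono : Monotone fun y : ℝ => σ y * y) (hσb : 0 ≤ σ b)
    (hab : a ≤ b) (hx : 0 ≤ x) (hδ : 0 ≤ δ) :
    ψ ((x - y) / δ) * (σ a * (a - x) - σ b * (b - y)) ≤ 0 := by
  have hψ := cutoff_nonneg hψmono hψ0 ((x - y) / δ)
  have hflux : ψ ((x - y) / δ) * (σ a * a - σ b * b) ≤ 0 :=
    mul_nonpos_of_nonneg_of_nonpos hψ (sub_nonpos.mpr (hσmono hab))
  have hσ : 0 ≤ (σ a - σ b) * (ψ ((x - y) / δ) * x) :=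
    mul_nonneg (sub_nonneg.mpr (hσanti hab)) (mul_nonneg hψ hx)
  have hdiff : 0 ≤ σ b * (ψ ((x - y) / δ) * (x - y)) :=
    mul_nonneg hσb (cutoff_div_mul_self_nonneg hψmono hψ0 hδ (x - y))
  linear_combination hflux + hσ + hdiff

theorem cutoff_mul_flux_le (hψmono : Monotone ψ) (hψ0 : ∀ x : ℝ, x ≤ 0 → ψ x = 0)
    (hψ1 : ∀ x : ℝ, 1 ≤ x → ψ x = 1) (hσanti : Antitone σ)
    (hσmono : Monotone fun y : ℝ => σ y * y) (hσb : 0 ≤ σ b) (hba : b ≤ a) (hx : 0 ≤ x)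
    (hδ : 0 < δ) :
    ψ ((x - y) / δ) * (σ a * (a - x) - σ b * (b - y))
      ≤ σ a * (a - x) - σ b * (b - y) + σ b * δ := by
  have hψ := cutoff_le_one hψmono hψ1 ((x - y) / δ)
  have hflux : ψ ((x - y) / δ) * (σ a * a - σ b * b) ≤ σ a * a - σ b * b :=
    mul_le_of_le_one_left (sub_nonneg.mpr (hσmono hba)) hψ
  have hσ : (σ b - σ a) * (ψ ((x - y) / δ) * x) ≤ (σ b - σ a) * x :=
    mul_le_mul_of_nonneg_left (mul_le_of_le_one_left hx hψ) (sub_nonneg.mpr (hσanti hba))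
  have hdiff : σ b * (x - y - δ) ≤ σ b * (ψ ((x - y) / δ) * (x - y)) :=
    mul_le_mul_of_nonneg_left (sub_le_cutoff_div_mul_self hψmono hψ0 hψ1 hδ (x - y)) hσb
  linear_combination hflux + hσ + hdiff

end Cutoff

theorem integral_cutoff_mul_flux_le {α : Type*} [MeasurableSpace α] {μ : Measure α}
    [IsProbabilityMeasure μ] {ψ σ : ℝ → ℝ} (hψmono : Monotone ψ)
    (hψ0 : ∀ x : ℝ, x ≤ 0 → ψ x = 0) (hψ1 : ∀ x : ℝ, 1 ≤ x → ψ x = 1) (hσanti : Antitone σ)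
    (hσmono : Monotone fun y : ℝ => σ y * y) (hσ0 : ∀ y : ℝ, 0 ≤ σ y) {δ : ℝ} (hδ : 0 < δ)
    {f g : α → ℝ} (hf : Integrable f μ) (hg : Integrable g μ) (hf0 : 0 ≤ᵐ[μ] f) :
    ∫ v, ψ ((f v - g v) / δ) *
        (σ (∫ w, f w ∂μ) * ((∫ w, f w ∂μ) - f v) - σ (∫ w, g w ∂μ) * ((∫ w, g w ∂μ) - g v)) ∂μ
      ≤ σ (∫ w, g w ∂μ) * δ := by
  set a := ∫ w, f w ∂μ
  set b := ∫ w, g w ∂μ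
  have hLf : Integrable (fun v => σ a * (a - f v)) μ := ((integrable_const a).sub hf).const_mul _
  have hLg : Integrable (fun v => σ b * (b - g v)) μ := ((integrable_const b).sub hg).const_mul _
  have hflux : Integrable (fun v => σ a * (a - f v) - σ b * (b - g v)) μ := hLf.sub hLg
  rcases le_total a b with hab | hba
  · calc _ ≤ 0 := integral_nonpos_of_ae <| hf0.mono fun v hv =>
          cutoff_mul_flux_nonpos hψmono hψ0 hσanti hσmono (hσ0 b) hab hv hδ.le
      _ ≤ σ b * δ := mul_nonneg (hσ0 b) hδ.le
  · have hweighted : Integrable (fun v => ψ ((f v - g v) / δ) *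
        (σ a * (a - f v) - σ b * (b - g v))) μ :=
      hflux.bdd_mul (hψmono.measurable.comp_aemeasurable
          ((hf.sub hg).aemeasurable.div_const δ)).aestronglyMeasurable
        (.of_forall fun v => by
          rw [Real.norm_eq_abs, abs_of_nonneg (cutoff_nonneg hψmono hψ0 _)]
          exact cutoff_le_one hψmono hψ1 _)
    have hflux_mean : ∫ v, (σ a * (a - f v) - σ b * (b - g v)) ∂μ = 0 := by
      rw [integral_sub hLf hLg, integral_const_mul, integral_const_mul,
        integral_integral_sub_self hf, integral_integral_sub_self hg]
      ring
    calc _ ≤ ∫ v, (σ a * (a - f v) - σ b * (b - g v) + σ b * δ) ∂μ :=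
          integral_mono_ae hweighted (hflux.add (integrable_const _)) <| hf0.mono fun v hv =>
            cutoff_mul_flux_le hψmono hψ0 hψ1 hσanti hσmono (hσ0 b) hba hv hδ
      _ = σ b * δ := by
        rw [integral_add hflux (integrable_const _), hflux_mean, integral_const]
        simp

theorem accretivity_smooth_approx_general
    (N : ℕ) (σ : ℝ → ℝ) (σstar σStar : ℝ)
    (hσstar : 0 < σstar) (hσStar : 0 < σStar)
    (hσbound : ∀ y : ℝ, σstar ≤ σ y ∧ σ y ≤ σStar)
    (hσanti : Antitone σ)
    (hσmono : Monotone fun y : ℝ => σ y * y)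
    (ψ : ℝ → ℝ) (hψmono : Monotone ψ)
    (hψ0 : ∀ x : ℝ, x ≤ 0 → ψ x = 0) (hψ1 : ∀ x : ℝ, 1 ≤ x → ψ x = 1) :
    ∃ C > (0 : ℝ), ∀ δ > (0 : ℝ), ∀ f g : Torus N → ℝ,
      Integrable f → Integrable g → 0 ≤ᵐ[volume] f →
      ∫ v, ψ ((f v - g v) / δ) *
          (σ (∫ w, f w) * ((∫ w, f w) - f v) - σ (∫ w, g w) * ((∫ w, g w) - g v))
        ≤ C * (1 + ∫ v, |f v|) * δ := by
  refine ⟨σStar, hσStar, fun δ hδ f g hf hg hf0 => ?_⟩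
  have hσ0 (y : ℝ) : 0 ≤ σ y := hσstar.le.trans (hσbound y).1
  have hnorm : 1 ≤ 1 + ∫ v, |f v| := le_add_of_nonneg_right (integral_nonneg fun _ => abs_nonneg _)
  calc _ ≤ σ (∫ w, g w) * δ :=
        integral_cutoff_mul_flux_le hψmono hψ0 hψ1 hσanti hσmono hσ0 hδ hf hg hf0
    _ ≤ σStar * δ := mul_le_mul_of_nonneg_right (hσbound _).2 hδ.le
    _ ≤ σStar * (1 + ∫ v, |f v|) * δ := by
        gcongr
        exact le_mul_of_one_le_right hσStar.le hnorm

theorem accretivity_smooth_approx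
    (N : ℕ) (σ : ℝ → ℝ) (σstar σStar : ℝ) (K : NNReal)
    (hσstar : 0 < σstar) (hσStar : 0 < σStar)
    (hσbound : ∀ y : ℝ, σstar ≤ σ y ∧ σ y ≤ σStar)
    (hσlip : LipschitzWith K σ)
    (hσanti : Antitone σ)
    (hσmono : Monotone fun y : ℝ => σ y * y)
    (ψ : ℝ → ℝ) (hψC2 : ContDiff ℝ 2 ψ) (hψmono : Monotone ψ)
    (hψ0 : ∀ x : ℝ, x ≤ 0 → ψ x = 0) (hψ1 : ∀ x : ℝ, 1 ≤ x → ψ x = 1)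
    (hψmid : ∀ x ∈ Set.Ioo (0 : ℝ) 1, 0 < ψ x ∧ ψ x < 1) :
    ∃ C > (0 : ℝ), ∀ δ > (0 : ℝ), ∀ f g : Torus N → ℝ,
      Integrable f → Integrable g → 0 ≤ᵐ[volume] f →
      ∫ v, ψ ((f v - g v) / δ) *
          (σ (∫ w, f w) * ((∫ w, f w) - f v) - σ (∫ w, g w) * ((∫ w, g w) - g v))
        ≤ C * (1 + ∫ v, |f v|) * δ :=
  accretivity_smooth_approx_general N σ σstar σStar hσstar hσStar hσbound hσanti hσmono ψ hψmono hψ0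
    hψ1
end
end

section
/- For every δ > 0 and all f, g ∈ L¹(V), the quantity J₁ := ∫_V [σ(⟨f⟩)⟨f⟩ − σ(⟨g⟩)⟨g⟩]·[φ_δ'(f(v) − g(v)) − φ_δ'(⟨f⟩ − ⟨g⟩)] dv satisfies J₁ ≤ 2(‖σ‖_{Lip}·|⟨f⟩| + σ^*)·δ; in particular J₁ ≤ C(1 + |⟨f⟩|)δ for a constant C depending only on the Lipschitz constant of σ and on σ^*. -/
/- STATEMENT 4: For every `δ > 0` and all `f, g ∈ L¹(V)`, the quantity
`J₁ = ∫_V [σ(⟨f⟩)⟨f⟩ − σ(⟨g⟩)⟨g⟩] [φ_δ'(f − g) − φ_δ'(⟨f⟩ − ⟨g⟩)] dv` satisfies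
`J₁ ≤ 2 (‖σ‖_Lip |⟨f⟩| + σ^*) δ`; in particular `J₁ ≤ C (1 + |⟨f⟩|) δ` for a constant `C`
depending only on the Lipschitz constant of `σ` and on `σ^*`.
Here `φ_δ'(x) = ψ(x/δ)`. -/

open MeasureTheory

noncomputable section

instance addCircle_prob : IsProbabilityMeasure (volume : Measure (AddCircle (1 : ℝ))) :=
  ⟨by simp⟩

instance torus_prob (N : ℕ) : IsProbabilityMeasure (volume : Measure (Torus N)) := by
  have : (volume : Measure (Torus N)) = Measure.pi fun _ => volume := rfl
  rw [this]
  infer_instance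

theorem J1_bound
    (N : ℕ) (σ : ℝ → ℝ) (σstar σStar : ℝ) (K : NNReal)
    (hσstar : 0 < σstar) (hσStar : 0 < σStar)
    (hσbound : ∀ y : ℝ, σstar ≤ σ y ∧ σ y ≤ σStar)
    (hσlip : LipschitzWith K σ)
    (hσanti : Antitone σ)
    (hσmono : Monotone fun y : ℝ => σ y * y)
    (ψ : ℝ → ℝ) (hψC2 : ContDiff ℝ 2 ψ) (hψmono : Monotone ψ)
    (hψ0 : ∀ x : ℝ, x ≤ 0 → ψ x = 0) (hψ1 : ∀ x : ℝ, 1 ≤ x → ψ x = 1)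
    (hψmid : ∀ x ∈ Set.Ioo (0 : ℝ) 1, 0 < ψ x ∧ ψ x < 1) :
    (∀ δ > (0 : ℝ), ∀ f g : Torus N → ℝ, Integrable f → Integrable g →
      ∫ v, (σ (∫ w, f w) * (∫ w, f w) - σ (∫ w, g w) * (∫ w, g w)) *
          (ψ ((f v - g v) / δ) - ψ (((∫ w, f w) - ∫ w, g w) / δ))
        ≤ 2 * ((K : ℝ) * |∫ w, f w| + σStar) * δ)
    ∧ ∃ C > (0 : ℝ), ∀ δ > (0 : ℝ), ∀ f g : Torus N → ℝ, Integrable f → Integrable g →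
      ∫ v, (σ (∫ w, f w) * (∫ w, f w) - σ (∫ w, g w) * (∫ w, g w)) *
          (ψ ((f v - g v) / δ) - ψ (((∫ w, f w) - ∫ w, g w) / δ))
        ≤ C * (1 + |∫ w, f w|) * δ := by
  have hψnn : ∀ x : ℝ, 0 ≤ ψ x := by
    intro x
    rcases le_or_gt x 0 with h | h
    · rw [hψ0 x h]
    · have := hψmono h.le
      rwa [hψ0 0 le_rfl] at this
  have hψle1 : ∀ x : ℝ, ψ x ≤ 1 := by
    intro x
    rcases le_or_gt 1 x with h | h
    · rw [hψ1 x h]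
    · have := hψmono h.le
      rwa [hψ1 1 le_rfl] at this
  have key : ∀ δ > (0 : ℝ), ∀ f g : Torus N → ℝ, Integrable f → Integrable g →
      ∫ v, (σ (∫ w, f w) * (∫ w, f w) - σ (∫ w, g w) * (∫ w, g w)) *
          (ψ ((f v - g v) / δ) - ψ (((∫ w, f w) - ∫ w, g w) / δ))
        ≤ 2 * ((K : ℝ) * |∫ w, f w| + σStar) * δ := by
    intro δ hδ f g hf hg
    set a : ℝ := ∫ w, f w with ha
    set b : ℝ := ∫ w, g w with hb
    set D : ℝ := σ a * a - σ b * b with hD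
    have hRHSnn : 0 ≤ 2 * ((K : ℝ) * |a| + σStar) * δ := by positivity
    have hrw : (∫ v, D * (ψ ((f v - g v) / δ) - ψ ((a - b) / δ)))
        = D * ∫ v, (ψ ((f v - g v) / δ) - ψ ((a - b) / δ)) :=
      integral_const_mul D _
    rw [hrw]
    rcases le_or_gt a b with hab | hab
    · -- a ≤ b : D ≤ 0 and the integral is nonneg
      have hD0 : D ≤ 0 := sub_nonpos.mpr (hσmono hab)
      have hz : ψ ((a - b) / δ) = 0 :=
        hψ0 _ (div_nonpos_of_nonpos_of_nonneg (by linarith) hδ.le)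
      have hInn : 0 ≤ ∫ v, (ψ ((f v - g v) / δ) - ψ ((a - b) / δ)) := by
        apply integral_nonneg
        intro v
        rw [hz]
        simpa using hψnn ((f v - g v) / δ)
      calc D * ∫ v, (ψ ((f v - g v) / δ) - ψ ((a - b) / δ))
          ≤ 0 := mul_nonpos_of_nonpos_of_nonneg hD0 hInn
        _ ≤ _ := hRHSnn
    · rcases le_or_gt δ (a - b) with hδab | hδab
      · -- a - b ≥ δ : ψ((a-b)/δ) = 1, integral nonpos, D ≥ 0
        have hD0 : 0 ≤ D := sub_nonneg.mpr (hσmono hab.le)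
        have hz : ψ ((a - b) / δ) = 1 := hψ1 _ ((one_le_div hδ).mpr hδab)
        have hInp : (∫ v, (ψ ((f v - g v) / δ) - ψ ((a - b) / δ))) ≤ 0 := by
          apply integral_nonpos
          intro v
          rw [hz]
          simpa using hψle1 ((f v - g v) / δ)
        calc D * ∫ v, (ψ ((f v - g v) / δ) - ψ ((a - b) / δ))
            ≤ 0 := mul_nonpos_of_nonneg_of_nonpos hD0 hInp
          _ ≤ _ := hRHSnn
      · -- 0 < a - b < δ
        have hσb : |σ b| ≤ σStar := by
          rw [abs_of_pos (lt_of_lt_of_le hσstar (hσbound b).1)]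
          exact (hσbound b).2
        have hlip : |σ a - σ b| ≤ (K : ℝ) * (a - b) := by
          have := hσlip.dist_le_mul a b
          rw [Real.dist_eq, Real.dist_eq] at this
          rwa [abs_of_pos (sub_pos.mpr hab)] at this
        have hDabs : |D| ≤ ((K : ℝ) * |a| + σStar) * δ := by
          have h1 : D = (σ a - σ b) * a + σ b * (a - b) := by ring
          calc |D| = |(σ a - σ b) * a + σ b * (a - b)| := by rw [h1]
            _ ≤ |(σ a - σ b) * a| + |σ b * (a - b)| := abs_add_le _ _
            _ = |σ a - σ b| * |a| + |σ b| * |a - b| := by rw [abs_mul, abs_mul]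
            _ ≤ ((K : ℝ) * (a - b)) * |a| + σStar * (a - b) := by
                have habs : |a - b| = a - b := abs_of_pos (sub_pos.mpr hab)
                rw [habs]
                exact add_le_add (mul_le_mul_of_nonneg_right hlip (abs_nonneg a))
                  (mul_le_mul_of_nonneg_right hσb (by linarith))
            _ ≤ ((K : ℝ) * δ) * |a| + σStar * δ := by
                have : (0:ℝ) ≤ (K : ℝ) := K.coe_nonneg
                have h2 : a - b ≤ δ := hδab.le
                nlinarith [abs_nonneg a]
            _ = ((K : ℝ) * |a| + σStar) * δ := by ring
        have hIabs : |∫ v, (ψ ((f v - g v) / δ) - ψ ((a - b) / δ))| ≤ 1 := by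
          calc |∫ v, (ψ ((f v - g v) / δ) - ψ ((a - b) / δ))|
              ≤ ∫ v, |ψ ((f v - g v) / δ) - ψ ((a - b) / δ)| := by
                simpa [Real.norm_eq_abs] using
                  norm_integral_le_integral_norm
                    (fun v => ψ ((f v - g v) / δ) - ψ ((a - b) / δ))
            _ ≤ ∫ (_ : Torus N), (1 : ℝ) := by
                apply integral_mono_of_nonneg
                · filter_upwards with v using abs_nonneg _
                · exact integrable_const 1
                · filter_upwards with v
                  have h1 := hψnn ((f v - g v) / δ)
                  have h2 := hψle1 ((f v - g v) / δ)
                  have h3 := hψnn ((a - b) / δ)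
                  have h4 := hψle1 ((a - b) / δ)
                  rw [abs_le]
                  constructor <;> simp <;> linarith
            _ = 1 := by simp
        calc D * ∫ v, (ψ ((f v - g v) / δ) - ψ ((a - b) / δ))
            ≤ |D * ∫ v, (ψ ((f v - g v) / δ) - ψ ((a - b) / δ))| := le_abs_self _
          _ = |D| * |∫ v, (ψ ((f v - g v) / δ) - ψ ((a - b) / δ))| := abs_mul _ _
          _ ≤ (((K : ℝ) * |a| + σStar) * δ) * 1 := by
              apply mul_le_mul hDabs hIabs (abs_nonneg _)
              positivity
          _ ≤ 2 * ((K : ℝ) * |a| + σStar) * δ := by nlinarith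
  refine ⟨key, 2 * ((K : ℝ) + σStar), by positivity, ?_⟩
  intro δ hδ f g hf hg
  calc _ ≤ 2 * ((K : ℝ) * |∫ w, f w| + σStar) * δ := key δ hδ f g hf hg
    _ ≤ 2 * ((K : ℝ) + σStar) * (1 + |∫ w, f w|) * δ := by
        have h1 : (0:ℝ) ≤ (K : ℝ) := K.coe_nonneg
        have h2 : (0:ℝ) ≤ |∫ w, f w| := abs_nonneg _
        nlinarith [mul_nonneg h1 hδ.le, mul_nonneg (mul_nonneg hσStar.le h2) hδ.le]
end
end

section
/- For every δ > 0 and all f, g ∈ L¹(V) with f ≥ 0 almost everywhere, the quantity J₂ := ∫_V [σ(⟨f⟩)f(v) − σ(⟨g⟩)g(v)]·[φ_δ'(⟨f⟩ − ⟨g⟩) − φ_δ'(f(v) − g(v))] dv satisfies J₂ ≤ C(1 + ‖f‖_{L¹(V)})·δ for a constant C depending only on the Lipschitz constant of σ and on σ^*. -/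
/-!
Write `A = σ(F) f - σ(G) g` and `B = ψ((F - G)/δ) - ψ((f - g)/δ)` with `F = ⟨f⟩`, `G = ⟨g⟩`,
so `|B| ≤ 1`. Since `ψ` is monotone and constant outside `[0, 1]`, `B ≠ 0` pins one of the two
differences to a window of width `δ`. If `B > 0` then `F > G` and `f - g < δ`, so, `σ` being
non-increasing, `A ≤ σ(G)(f - g) ≤ σ^* δ`. If `B < 0` then `f > g` and `F < G + δ`, so
`A ≥ (σ(G + δ) - σ(G)) f ≥ -‖σ‖_Lip δ f`. Hence `A B ≤ σ^* δ + ‖σ‖_Lip δ f` pointwise, and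
integrating against the probability measure gives the bound with `C = σ^* + ‖σ‖_Lip`.
-/

open MeasureTheory

noncomputable section

open scoped NNReal

instance : IsProbabilityMeasure (volume : Measure UnitAddCircle) :=
  ⟨UnitAddCircle.measure_univ⟩

section Cutoff

variable {ψ : ℝ → ℝ} {a b : ℝ}

lemma Monotone.mem_Icc_of_eq_zero_of_eq_one (hψ : Monotone ψ) (hψ0 : ∀ x ≤ a, ψ x = 0)
    (hψ1 : ∀ x, b ≤ x → ψ x = 1) (x : ℝ) : ψ x ∈ Set.Icc 0 1 :=
  ⟨hψ0 _ (min_le_right x a) ▸ hψ (min_le_left x a),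
    hψ1 _ (le_max_right x b) ▸ hψ (le_max_left x b)⟩

lemma Monotone.abs_sub_le_one_of_eq_zero_of_eq_one (hψ : Monotone ψ) (hψ0 : ∀ x ≤ a, ψ x = 0)
    (hψ1 : ∀ x, b ≤ x → ψ x = 1) (x y : ℝ) : |ψ x - ψ y| ≤ 1 := by
  have hx := hψ.mem_Icc_of_eq_zero_of_eq_one hψ0 hψ1 x
  have hy := hψ.mem_Icc_of_eq_zero_of_eq_one hψ0 hψ1 y
  rw [abs_le]
  constructor <;> linarith [hx.1, hx.2, hy.1, hy.2]

lemma Monotone.lt_and_lt_of_lt_of_eq_zero_of_eq_one (hψ : Monotone ψ)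
    (hψ0 : ∀ x ≤ a, ψ x = 0) (hψ1 : ∀ x, b ≤ x → ψ x = 1) {u w : ℝ} (h : ψ u < ψ w) :
    a < w ∧ u < b := by
  have huw := hψ.reflect_lt h
  constructor
  · by_contra! hw
    rw [hψ0 w hw, hψ0 u (huw.le.trans hw)] at h
    exact lt_irrefl _ h
  · by_contra! hu
    rw [hψ1 u hu, hψ1 w (hu.trans huw.le)] at h
    exact lt_irrefl _ h

end Cutoff

lemma mul_le_add_of_abs_le_one {A B p q : ℝ} (hB : |B| ≤ 1) (hp : 0 ≤ p) (hq : 0 ≤ q)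
    (hpos : 0 < B → A ≤ p) (hneg : B < 0 → -q ≤ A) : A * B ≤ p + q := by
  obtain ⟨hB₁, hB₂⟩ := abs_le.mp hB
  rcases lt_trichotomy B 0 with hB | rfl | hB
  · nlinarith [hneg hB]
  · simpa using add_nonneg hp hq
  · nlinarith [hpos hB]

section Antitone

variable {σ : ℝ → ℝ} {F G x y δ : ℝ}

lemma Antitone.mul_sub_mul_le (hσ : Antitone σ) (hσ0 : 0 ≤ σ G) (hGF : G ≤ F) (hx : 0 ≤ x)
    (hxy : x - y ≤ δ) : σ F * x - σ G * y ≤ σ G * δ := by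
  have hσF : σ F * x ≤ σ G * x := mul_le_mul_of_nonneg_right (hσ hGF) hx
  nlinarith [mul_le_mul_of_nonneg_left hxy hσ0]

lemma LipschitzWith.neg_mul_le_mul_sub_mul {K : ℝ≥0} (hσlip : LipschitzWith K σ)
    (hσ : Antitone σ) (hσ0 : 0 ≤ σ G) (hFG : F ≤ G + δ) (hδ : 0 ≤ δ) (hx : 0 ≤ x) (hyx : y ≤ x) :
    -(K * δ * x) ≤ σ F * x - σ G * y := by
  have hlip : σ G - K * δ ≤ σ (G + δ) := by
    have := hσlip.dist_le_mul (G + δ) G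
    rw [Real.dist_eq, Real.dist_eq, add_sub_cancel_left, abs_of_nonneg hδ] at this
    linarith [neg_abs_le (σ (G + δ) - σ G)]
  have hσF : (σ G - K * δ) * x ≤ σ F * x :=
    mul_le_mul_of_nonneg_right (hlip.trans (hσ hFG)) hx
  nlinarith [mul_le_mul_of_nonneg_left hyx hσ0]

end Antitone

lemma J2_integrand_le {σ ψ : ℝ → ℝ} {σStar : ℝ} {K : ℝ≥0} (hσ0 : ∀ y, 0 ≤ σ y)
    (hσle : ∀ y, σ y ≤ σStar) (hσlip : LipschitzWith K σ) (hσ : Antitone σ) (hψ : Monotone ψ)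
    (hψ0 : ∀ x ≤ 0, ψ x = 0) (hψ1 : ∀ x, 1 ≤ x → ψ x = 1) {δ : ℝ} (hδ : 0 < δ)
    (F G : ℝ) {x : ℝ} (hx : 0 ≤ x) (y : ℝ) :
    (σ F * x - σ G * y) * (ψ ((F - G) / δ) - ψ ((x - y) / δ)) ≤ σStar * δ + K * δ * x := by
  have hσStar : 0 ≤ σStar := (hσ0 0).trans (hσle 0)
  refine mul_le_add_of_abs_le_one (hψ.abs_sub_le_one_of_eq_zero_of_eq_one hψ0 hψ1 _ _)
    (by positivity) (by positivity) (fun hB => ?_) (fun hB => ?_)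
  · obtain ⟨hFG, hxy⟩ := hψ.lt_and_lt_of_lt_of_eq_zero_of_eq_one hψ0 hψ1 (sub_pos.mp hB)
    rw [div_pos_iff_of_pos_right hδ, sub_pos] at hFG
    rw [div_lt_one hδ] at hxy
    exact (hσ.mul_sub_mul_le (hσ0 G) hFG.le hx hxy.le).trans
      (mul_le_mul_of_nonneg_right (hσle G) hδ.le)
  · obtain ⟨hyx, hFG⟩ := hψ.lt_and_lt_of_lt_of_eq_zero_of_eq_one hψ0 hψ1 (sub_neg.mp hB)
    rw [div_pos_iff_of_pos_right hδ, sub_pos] at hyx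
    rw [div_lt_one hδ, sub_lt_iff_lt_add'] at hFG
    exact hσlip.neg_mul_le_mul_sub_mul hσ (hσ0 G) (by linarith) hδ.le hx hyx.le

lemma integral_J2_integrand_le {Ω : Type*} [MeasurableSpace Ω] {μ : Measure Ω}
    [IsProbabilityMeasure μ] {σ ψ : ℝ → ℝ} {σStar : ℝ} {K : ℝ≥0} (hσ0 : ∀ y, 0 ≤ σ y)
    (hσle : ∀ y, σ y ≤ σStar) (hσlip : LipschitzWith K σ) (hσ : Antitone σ) (hψ : Monotone ψ)
    (hψ0 : ∀ x ≤ 0, ψ x = 0) (hψ1 : ∀ x, 1 ≤ x → ψ x = 1) {δ : ℝ} (hδ : 0 < δ) (F G : ℝ)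
    {f g : Ω → ℝ} (hf : Integrable f μ) (hg : Integrable g μ) (hf0 : 0 ≤ᵐ[μ] f) :
    ∫ v, (σ F * f v - σ G * g v) * (ψ ((F - G) / δ) - ψ ((f v - g v) / δ)) ∂μ
      ≤ σStar * δ + K * δ * ∫ v, f v ∂μ := by
  have hψmeas : AEStronglyMeasurable (fun v => ψ ((F - G) / δ) - ψ ((f v - g v) / δ)) μ :=
    aestronglyMeasurable_const.sub <| hψ.measurable.comp_aemeasurable
      ((hf.aemeasurable.sub hg.aemeasurable).div_const δ) |>.aestronglyMeasurable
  have hint : Integrable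
      (fun v => (σ F * f v - σ G * g v) * (ψ ((F - G) / δ) - ψ ((f v - g v) / δ))) μ :=
    ((hf.const_mul _).sub (hg.const_mul _)).mul_bdd hψmeas <| .of_forall fun v =>
      hψ.abs_sub_le_one_of_eq_zero_of_eq_one hψ0 hψ1 _ _
  calc _ ≤ ∫ v, (σStar * δ + K * δ * f v) ∂μ :=
        integral_mono_ae hint ((integrable_const _).add (hf.const_mul _)) <| by
          filter_upwards [hf0] with v hv
          exact J2_integrand_le hσ0 hσle hσlip hσ hψ hψ0 hψ1 hδ F G hv (g v)
    _ = σStar * δ + K * δ * ∫ v, f v ∂μ := by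
        rw [integral_add (integrable_const _) (hf.const_mul _), integral_const,
          integral_const_mul, probReal_univ, one_smul]

theorem J2_bound_general
    (N : ℕ) (σ : ℝ → ℝ) (σstar σStar : ℝ) (K : NNReal)
    (hσstar : 0 < σstar)
    (hσbound : ∀ y : ℝ, σstar ≤ σ y ∧ σ y ≤ σStar)
    (hσlip : LipschitzWith K σ)
    (hσanti : Antitone σ)
    (ψ : ℝ → ℝ) (hψmono : Monotone ψ)
    (hψ0 : ∀ x : ℝ, x ≤ 0 → ψ x = 0) (hψ1 : ∀ x : ℝ, 1 ≤ x → ψ x = 1) :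
    ∃ C > (0 : ℝ), ∀ δ > (0 : ℝ), ∀ f g : Torus N → ℝ,
      Integrable f → Integrable g → 0 ≤ᵐ[volume] f →
      ∫ v, (σ (∫ w, f w) * f v - σ (∫ w, g w) * g v) *
          (ψ (((∫ w, f w) - ∫ w, g w) / δ) - ψ ((f v - g v) / δ))
        ≤ C * (1 + ∫ v, |f v|) * δ := by
  have hσ0 : ∀ y, 0 ≤ σ y := fun y => hσstar.le.trans (hσbound y).1
  have hσStar : 0 < σStar := hσstar.trans_le ((hσbound 0).1.trans (hσbound 0).2)
  refine ⟨σStar + K, by positivity, fun δ hδ f g hf hg hf0 => ?_⟩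
  have hJ2 := integral_J2_integrand_le hσ0 (fun y => (hσbound y).2) hσlip hσanti hψmono hψ0 hψ1
    hδ (∫ w, f w) (∫ w, g w) hf hg hf0
  have hf_le : ∫ v, f v ≤ ∫ v, |f v| := integral_mono hf hf.abs fun v => le_abs_self _
  have habs : 0 ≤ ∫ v, |f v| := integral_nonneg fun v => abs_nonneg _
  have hKδ : 0 ≤ (K : ℝ) * δ := by positivity
  refine hJ2.trans ?_
  nlinarith [mul_le_mul_of_nonneg_left hf_le hKδ, mul_nonneg (mul_nonneg hσStar.le habs) hδ.le]

theorem J2_bound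
    (N : ℕ) (σ : ℝ → ℝ) (σstar σStar : ℝ) (K : NNReal)
    (hσstar : 0 < σstar) (hσStar : 0 < σStar)
    (hσbound : ∀ y : ℝ, σstar ≤ σ y ∧ σ y ≤ σStar)
    (hσlip : LipschitzWith K σ)
    (hσanti : Antitone σ)
    (hσmono : Monotone fun y : ℝ => σ y * y)
    (ψ : ℝ → ℝ) (hψC2 : ContDiff ℝ 2 ψ) (hψmono : Monotone ψ)
    (hψ0 : ∀ x : ℝ, x ≤ 0 → ψ x = 0) (hψ1 : ∀ x : ℝ, 1 ≤ x → ψ x = 1)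
    (hψmid : ∀ x ∈ Set.Ioo (0 : ℝ) 1, 0 < ψ x ∧ ψ x < 1) :
    ∃ C > (0 : ℝ), ∀ δ > (0 : ℝ), ∀ f g : Torus N → ℝ,
      Integrable f → Integrable g → 0 ≤ᵐ[volume] f →
      ∫ v, (σ (∫ w, f w) * f v - σ (∫ w, g w) * g v) *
          (ψ (((∫ w, f w) - ∫ w, g w) / δ) - ψ ((f v - g v) / δ))
        ≤ C * (1 + ∫ v, |f v|) * δ :=
  J2_bound_general N σ σstar σStar K hσstar hσbound hσlip hσanti ψ hψmono hψ0 hψ1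
end
end

section
/- (Gyöngy–Krylov characterization of convergence in probability.) Let X be a Polish space equipped with its Borel σ-algebra, and let (Y_n)_{n∈ℕ} be X-valued random variables on a probability space (Ω, ℱ, ℙ). Then (Y_n) converges in probability to some X-valued random variable if and only if the following holds: for every pair of subsequences (Y_{n_k}) and (Y_{m_k}), there exists a further subsequence along which the joint laws of (Y_{n_k}, Y_{m_k}) (probability measures on X × X) converge weakly to a probability measure μ on X × X satisfying μ({(x,y) ∈ X × X : x = y}) = 1. -/
/-!
Convergence in probability implies convergence in distribution, also for the pairs
`(Y (n k), Y (m k))`, whose joint laws therefore converge to the law of `(Z, Z)`, a measure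
carried by the diagonal. Conversely, since `{(x, y) | ε ≤ edist x y}` is closed and misses the
diagonal, the portmanteau theorem makes `P {ε ≤ edist (Y p) (Y q)}` small for large `p, q`:
the sequence is Cauchy in probability. A subsequence that is Cauchy fast enough converges almost
surely by Borel–Cantelli and completeness, and a sequence that is Cauchy in probability converges
in probability to the limit of any of its subsequences.
-/

open MeasureTheory Filter
open scoped Topology ENNReal BoundedContinuousFunction

theorem Filter.tendsto_prod_atTop_of_forall_strictMono {β : Type*} {u : ℕ × ℕ → β}
    {l : Filter β}
    (h : ∀ n m : ℕ → ℕ, StrictMono n → StrictMono m →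
      ∃ φ : ℕ → ℕ, StrictMono φ ∧ Tendsto (fun k => u (n (φ k), m (φ k))) atTop l) :
    Tendsto u atTop l := by
  refine tendsto_of_subseq_tendsto fun ns hns => ?_
  rw [← prod_atTop_atTop_eq, tendsto_prod_iff'] at hns
  obtain ⟨ψ₁, hψ₁, h₁⟩ := strictMono_subseq_of_tendsto_atTop hns.1
  obtain ⟨ψ₂, hψ₂, h₂⟩ := strictMono_subseq_of_tendsto_atTop (hns.2.comp hψ₁.tendsto_atTop)
  obtain ⟨φ, -, hu⟩ := h _ _ (h₁.comp hψ₂) h₂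
  exact ⟨ψ₁ ∘ ψ₂ ∘ φ, hu⟩

theorem cauchySeq_of_eventually_edist_lt_inv_two_pow {E : Type*} [PseudoEMetricSpace E]
    {u : ℕ → E} (h : ∀ᶠ k in atTop, edist (u k) (u (k + 1)) < 2⁻¹ ^ k) : CauchySeq u := by
  obtain ⟨K, hK⟩ := eventually_atTop.1 h
  refine (cauchySeq_shift K).1 <|
    cauchySeq_of_edist_le_geometric_two 1 ENNReal.one_ne_top fun n => ?_
  calc edist (u (n + K)) (u (n + 1 + K)) ≤ 2⁻¹ ^ (n + K) := by
        simpa only [Nat.add_right_comm n 1 K] using (hK (n + K) (Nat.le_add_left K n)).le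
    _ ≤ 2⁻¹ ^ n := pow_le_pow_right_of_le_one' (by norm_num) (Nat.le_add_right n K)
    _ = 1 / 2 ^ n := by rw [one_div, ENNReal.inv_pow]

namespace MeasureTheory

theorem ProbabilityMeasure.tendsto_measure_of_isClosed_of_measure_eq_zero {Ω ι : Type*}
    {L : Filter ι} [MeasurableSpace Ω] [TopologicalSpace Ω] [HasOuterApproxClosed Ω]
    [OpensMeasurableSpace Ω] {μ : ProbabilityMeasure Ω} {μs : ι → ProbabilityMeasure Ω}
    (hμs : Tendsto μs L (𝓝 μ)) {F : Set Ω} (hF : IsClosed F) (hμF : (μ : Measure Ω) F = 0) :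
    Tendsto (fun i => (μs i : Measure Ω) F) L (𝓝 0) :=
  tendsto_of_le_liminf_of_limsup_le zero_le (hμF ▸ limsup_measure_closed_le_of_tendsto hμs hF)

theorem tendsto_map_iff_forall_integral_comp_tendsto {ι Ω E : Type*} {l : Filter ι}
    [MeasurableSpace Ω] {P : Measure Ω} [IsProbabilityMeasure P]
    [TopologicalSpace E] [MeasurableSpace E] [OpensMeasurableSpace E]
    {G : ι → Ω → E} (hG : ∀ i, AEMeasurable (G i) P) {ν : ProbabilityMeasure E} :
    Tendsto (β := ProbabilityMeasure E)
        (fun i => ⟨P.map (G i), Measure.isProbabilityMeasure_map (hG i)⟩) l (𝓝 ν) ↔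
      ∀ F : E →ᵇ ℝ, Tendsto (fun i => ∫ ω, F (G i ω) ∂P) l (𝓝 (∫ x, F x ∂(ν : Measure E))) := by
  have hmap : ∀ (F : E →ᵇ ℝ) i, ∫ x, F x ∂(P.map (G i)) = ∫ ω, F (G i ω) ∂P := fun F i =>
    integral_map (hG i) F.continuous.aestronglyMeasurable
  refine ProbabilityMeasure.tendsto_iff_forall_integral_tendsto.trans (forall_congr' fun F => ?_)
  simp only [ProbabilityMeasure.coe_mk, hmap]

variable {α E : Type*} {m : MeasurableSpace α} {μ : Measure α}

section PseudoEMetricSpace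

variable [PseudoEMetricSpace E]

theorem TendstoInMeasure.prodMk {ι F : Type*} [PseudoEMetricSpace F] {l : Filter ι}
    {f : ι → α → E} {g : ι → α → F} {u : α → E} {v : α → F}
    (hf : TendstoInMeasure μ f l u) (hg : TendstoInMeasure μ g l v) :
    TendstoInMeasure μ (fun i x => (f i x, g i x)) l (fun x => (u x, v x)) := by
  intro ε hε
  refine tendsto_of_tendsto_of_tendsto_of_le_of_le tendsto_const_nhds
    (by simpa using (hf ε hε).add (hg ε hε)) (fun _ => zero_le) fun i => ?_
  calc μ {x | ε ≤ edist (f i x, g i x) (u x, v x)}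
      = μ ({x | ε ≤ edist (f i x) (u x)} ∪ {x | ε ≤ edist (g i x) (v x)}) := by
        simp only [Prod.edist_eq, le_max_iff, Set.ofPred_or]
    _ ≤ _ := measure_union_le _ _

def CauchyInMeasure (μ : Measure α) (f : ℕ → α → E) : Prop :=
  ∀ ε, 0 < ε → Tendsto (fun p : ℕ × ℕ => μ {x | ε ≤ edist (f p.1 x) (f p.2 x)}) atTop (𝓝 0)

variable {f : ℕ → α → E}

namespace CauchyInMeasure

theorem exists_seq_tendsto_ae [CompleteSpace E] (hf : CauchyInMeasure μ f) :
    ∃ ns : ℕ → ℕ, StrictMono ns ∧ ∀ᵐ x ∂μ, ∃ l, Tendsto (fun k => f (ns k) x) atTop (𝓝 l) := by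
  have hN : ∀ k : ℕ, ∃ N, ∀ j ≥ N, ∀ p q, j ≤ p → j ≤ q →
      μ {x | 2⁻¹ ^ k ≤ edist (f p x) (f q x)} < 2⁻¹ ^ k := by
    intro k
    have hk : (0 : ℝ≥0∞) < 2⁻¹ ^ k := ENNReal.pow_pos (by norm_num) k
    obtain ⟨N, hN⟩ := eventually_atTop_prod_self'.1 ((hf _ hk).eventually (gt_mem_nhds hk))
    exact ⟨N, fun j hj p q hp hq => hN p (hj.trans hp) q (hj.trans hq)⟩
  obtain ⟨ns, hns, hnsN⟩ := extraction_forall_of_eventually' hN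
  set S : ℕ → Set α := fun k => {x | 2⁻¹ ^ k ≤ edist (f (ns k) x) (f (ns (k + 1)) x)}
  have hS : ∀ k, μ (S k) ≤ 2⁻¹ ^ k := fun k =>
    (hnsN k _ _ le_rfl (hns k.lt_succ_self).le).le
  have hsum : ∑' k, μ (S k) ≠ ∞ := by
    refine ne_top_of_le_ne_top ?_ (ENNReal.tsum_le_tsum hS)
    simp [ENNReal.tsum_geometric, ENNReal.one_sub_inv_two]
  refine ⟨ns, hns, (ae_eventually_notMem hsum).mono fun x hx => ?_⟩
  exact cauchySeq_tendsto_of_complete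
    (cauchySeq_of_eventually_edist_lt_inv_two_pow (hx.mono fun k hk => not_le.1 hk))

theorem tendstoInMeasure_of_subseq (hf : CauchyInMeasure μ f) {ns : ℕ → ℕ}
    (hns : Tendsto ns atTop atTop) {g : α → E}
    (hg : TendstoInMeasure μ (fun k => f (ns k)) atTop g) : TendstoInMeasure μ f atTop g := by
  intro ε hε
  have hε₂ : 0 < ε / 2 := ENNReal.half_pos hε.ne'
  have hpair : Tendsto (fun j => (j, ns j)) atTop atTop := by
    rw [← prod_atTop_atTop_eq]
    exact tendsto_id.prodMk hns
  refine tendsto_of_tendsto_of_tendsto_of_le_of_le tendsto_const_nhds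
    (by simpa using ((hf _ hε₂).comp hpair).add (hg _ hε₂)) (fun _ => zero_le) fun j => ?_
  calc μ {x | ε ≤ edist (f j x) (g x)}
      ≤ μ ({x | ε / 2 ≤ edist (f j x) (f (ns j) x)} ∪
          {x | ε / 2 ≤ edist (f (ns j) x) (g x)}) := by
        refine measure_mono fun x hx => ?_
        by_contra hc
        simp only [Set.mem_union, Set.mem_ofPred_eq, not_or, not_le] at hc
        exact hx.not_gt <| (edist_triangle _ _ _).trans_lt <|
          (ENNReal.add_lt_add hc.1 hc.2).trans_eq (ENNReal.add_halves ε)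
    _ ≤ _ := measure_union_le _ _

theorem exists_tendstoInMeasure [CompleteSpace E] [MeasurableSpace E] [BorelSpace E]
    [SecondCountableTopology E] [IsFiniteMeasure μ] (hf : CauchyInMeasure μ f)
    (hf_meas : ∀ n, AEMeasurable (f n) μ) :
    ∃ g : α → E, Measurable g ∧ TendstoInMeasure μ f atTop g := by
  obtain ⟨ns, hns, hae⟩ := hf.exists_seq_tendsto_ae
  obtain ⟨g, hg, hfg⟩ := measurable_limit_of_tendsto_metrizable_ae (fun k => hf_meas (ns k)) hae
  exact ⟨g, hg, hf.tendstoInMeasure_of_subseq hns.tendsto_atTop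
    (tendstoInMeasure_of_tendsto_ae (fun k => (hf_meas _).aestronglyMeasurable) hfg)⟩

end CauchyInMeasure

end PseudoEMetricSpace

theorem cauchyInMeasure_of_forall_tendsto_diagonal [EMetricSpace E] [MeasurableSpace E]
    [OpensMeasurableSpace E] [SecondCountableTopology E] [IsProbabilityMeasure μ]
    {f : ℕ → α → E} (hf : ∀ n, AEMeasurable (f n) μ)
    (h : ∀ n m : ℕ → ℕ, StrictMono n → StrictMono m →
        ∃ φ : ℕ → ℕ, StrictMono φ ∧
        ∃ ν : Measure (E × E), IsProbabilityMeasure ν ∧ ν (Set.diagonal E) = 1 ∧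
          ∀ F : (E × E) →ᵇ ℝ,
            Tendsto (fun k => ∫ x, F (f (n (φ k)) x, f (m (φ k)) x) ∂μ) atTop (𝓝 (∫ q, F q ∂ν))) :
    CauchyInMeasure μ f := by
  intro ε hε
  refine tendsto_prod_atTop_of_forall_strictMono fun n m hn hm => ?_
  obtain ⟨φ, hφ, ν, hν, hdiag, hlim⟩ := h n m hn hm
  have hG : ∀ k, AEMeasurable (fun x => (f (n (φ k)) x, f (m (φ k)) x)) μ :=
    fun k => (hf _).prodMk (hf _)
  have hC : IsClosed {q : E × E | ε ≤ edist q.1 q.2} :=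
    isClosed_le continuous_const (continuous_fst.edist continuous_snd)
  have hνC : ν {q : E × E | ε ≤ edist q.1 q.2} = 0 := by
    have hdisj : {q : E × E | ε ≤ edist q.1 q.2} ⊆ (Set.diagonal E)ᶜ := fun q hq hqd => by
      rw [Set.mem_ofPred_eq, Set.mem_diagonal_iff.1 hqd, edist_self] at hq
      exact hε.not_ge hq
    exact measure_mono_null hdisj
      ((prob_compl_eq_zero_iff isClosed_diagonal.measurableSet).2 hdiag)
  refine ⟨φ, hφ, ?_⟩
  have := ProbabilityMeasure.tendsto_measure_of_isClosed_of_measure_eq_zero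
    ((tendsto_map_iff_forall_integral_comp_tendsto hG (ν := ⟨ν, hν⟩)).2 hlim) hC hνC
  exact this.congr fun k => Measure.map_apply_of_aemeasurable (hG k) hC.measurableSet

end MeasureTheory

theorem gyongy_krylov
    (X : Type*) [MetricSpace X] [TopologicalSpace.SeparableSpace X] [CompleteSpace X]
    [MeasurableSpace X] [BorelSpace X]
    (Ω : Type*) [MeasurableSpace Ω] (P : Measure Ω) [IsProbabilityMeasure P]
    (Y : ℕ → Ω → X) (hY : ∀ n, Measurable (Y n)) :
    (∃ Z : Ω → X, Measurable Z ∧ TendstoInMeasure P Y atTop Z)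
    ↔ (∀ n m : ℕ → ℕ, StrictMono n → StrictMono m →
        ∃ φ : ℕ → ℕ, StrictMono φ ∧
        ∃ μ : Measure (X × X), IsProbabilityMeasure μ ∧
          μ {q : X × X | q.1 = q.2} = 1 ∧
          ∀ F : BoundedContinuousFunction (X × X) ℝ,
            Tendsto (fun k => ∫ ω, F (Y (n (φ k)) ω, Y (m (φ k)) ω) ∂P)
              atTop (nhds (∫ q, F q ∂μ))) := by
  have : SecondCountableTopology X := UniformSpace.secondCountable_of_separable X
  have hY' : ∀ n, AEMeasurable (Y n) P := fun n => (hY n).aemeasurable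
  constructor
  · rintro ⟨Z, hZ, hYZ⟩ n m hn hm
    have hZZ : AEMeasurable (fun ω => (Z ω, Z ω)) P := (hZ.prodMk hZ).aemeasurable
    have hYY : ∀ k, AEMeasurable (fun ω => (Y (n k) ω, Y (m k) ω)) P :=
      fun k => (hY' _).prodMk (hY' _)
    refine ⟨id, strictMono_id, P.map fun ω => (Z ω, Z ω),
      Measure.isProbabilityMeasure_map hZZ, ?_, ?_⟩
    · change P.map (fun ω => (Z ω, Z ω)) (Set.diagonal X) = 1
      rw [Measure.map_apply_of_aemeasurable hZZ isClosed_diagonal.measurableSet]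
      exact (congrArg P (Set.eq_univ_of_forall fun _ => rfl)).trans measure_univ
    · exact (tendsto_map_iff_forall_integral_comp_tendsto hYY).1
        (((hYZ.comp hn.tendsto_atTop).prodMk (hYZ.comp hm.tendsto_atTop)).tendstoInDistribution
          hYY).tendsto
  · exact fun h => (cauchyInMeasure_of_forall_tendsto_diagonal hY' h).exists_tendstoInMeasure hY'
end
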